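/- Let A_n = {ψ(TR[i..i+n-1]) − ψ(TR[0..n-1]) : i ≥ 0}. Then A_4 = {(0,0,0), (0,1,−1), (1,0,−1)} and hence ρ^ab_TR(4) = 3. -/
import Mathlib


/-- Tribonacci numbers: T 0 = 0, T 1 = 1, T 2 = 1, T (n+3) = T (n+2) + T (n+1) + T n. -/
def T : ℕ → ℕ
  | 0 => 0
  | 1 => 1
  | 2 => 1
  | n + 3 => T (n + 2) + T (n + 1) + T n

/-- The Tribonacci morphism on letters: 0 ↦ 01, 1 ↦ 02, 2 ↦ 0. -/
def σm : ℕ → List ℕ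
  | 0 => [0, 1]
  | 1 => [0, 2]
  | _ => [0]

/-- The Tribonacci morphism extended to words by concatenation. -/
def σw : List ℕ → List ℕ
  | [] => []
  | a :: t => σm a ++ σw t

/-- The Tribonacci word, the fixed point of σ beginning with 0
(σ^[n+1] [0] has length > n and each σ^[m] [0] is a prefix of the next). -/
def TR (n : ℕ) : ℕ := ((σw^[n + 1]) [0]).getD n 0

/-- Number of occurrences of the letter `a` in the factor TR[i..i+n-1]. -/
def occ (a i n : ℕ) : ℕ := ((Finset.range n).filter (fun j => TR (i + j) = a)).card

/-- Parikh vector of the factor TR[i..i+n-1], as an element of ℤ³. -/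
def ψv (i n : ℕ) : ℤ × ℤ × ℤ := ((occ 0 i n : ℤ), (occ 1 i n : ℤ), (occ 2 i n : ℤ))

/-- Relative Parikh vector f(i,n) = ψ(TR[i..i+n-1]) − ψ(TR[0..n-1]). -/
def frel (i n : ℕ) : ℤ × ℤ × ℤ := ψv i n - ψv 0 n

/-- The set A_n of relative Parikh vectors. -/
def Aset (n : ℕ) : Set (ℤ × ℤ × ℤ) := {v | ∃ i, frel i n = v}

/-- Abelian complexity of TR: the number of distinct Parikh vectors of length-n factors. -/
noncomputable def ρab (n : ℕ) : ℕ := (Aset n).ncard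

/-- Value of a binary word e₁ ⋯ e_r in the Tribonacci numeration system:
[w]_T = Σ_{1 ≤ i ≤ r} e_i T_{r+2-i}.  (Index 0 of the list is e₁.) -/
def valT (w : List ℕ) : ℕ := ∑ i ∈ Finset.range w.length, w.getD i 0 * T (w.length + 1 - i)

/-- `w` is a valid Tribonacci representation: a binary word beginning with 1
and containing no factor 111. -/
def GoodRep (w : List ℕ) : Prop :=
  w.head? = some 1 ∧ (∀ d ∈ w, d ≤ 1) ∧ ¬ ([1, 1, 1] <:+: w)

/-- The last digit of a word, with the convention that it is 0 for the empty word. -/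
def lastDigit (w : List ℕ) : ℕ := w.getD (w.length - 1) 0

-- basic lemmas
lemma σw_append (a b : List ℕ) : σw (a ++ b) = σw a ++ σw b := by
  induction a with
  | nil => rfl
  | cons x t ih => simp [σw, ih]

lemma σm_len_pos (a : ℕ) : 1 ≤ (σm a).length := by
  rcases a with _ | _ | n <;> simp [σm]

lemma σm_len_le (a : ℕ) : (σm a).length ≤ 2 := by
  rcases a with _ | _ | n <;> simp [σm]

def W (k : ℕ) : List ℕ := σw^[k] [0]

lemma W_succ (k : ℕ) : W (k + 1) = σw (W k) := Function.iterate_succ_apply' σw k [0]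

lemma σw_prefix {a b : List ℕ} (h : a <+: b) : σw a <+: σw b := by
  obtain ⟨t, rfl⟩ := h
  exact ⟨σw t, (σw_append a t).symm⟩

lemma W_prefix_succ (k : ℕ) : W k <+: W (k + 1) := by
  induction k with
  | zero => exact ⟨[1], rfl⟩
  | succ n ih => rw [W_succ, W_succ]; exact σw_prefix ih

lemma W_prefix {k l : ℕ} (h : k ≤ l) : W k <+: W l := by
  induction l with
  | zero => simp_all
  | succ n ih =>
    rcases Nat.lt_or_ge k (n+1) with h' | h'
    · exact (ih (Nat.lt_succ_iff.mp h')).trans (W_prefix_succ n)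
    · have : k = n + 1 := le_antisymm h h'
      subst this; exact List.prefix_refl _

lemma W_head (k : ℕ) : ∃ t, W k = 0 :: t := by
  obtain ⟨t, ht⟩ := W_prefix (Nat.zero_le k)
  exact ⟨t, by simpa [W] using ht.symm⟩

lemma σw_len_ge (w : List ℕ) : w.length ≤ (σw w).length := by
  induction w with
  | nil => simp [σw]
  | cons a t ih => simp only [σw, List.length_append, List.length_cons]
                   have := σm_len_pos a; omega

lemma W_len (k : ℕ) : k + 1 ≤ (W k).length := by
  induction k with
  | zero => simp [W]
  | succ n ih =>
    obtain ⟨t, ht⟩ := W_head n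
    rw [W_succ, ht]
    simp only [σw, σm, List.length_append, List.length_cons, List.length_nil]
    have := σw_len_ge t
    have : t.length + 1 = (W n).length := by rw [ht]; simp
    omega

lemma prefix_getD {a b : List ℕ} (h : a <+: b) {m : ℕ} (hm : m < a.length) :
    a.getD m 0 = b.getD m 0 := by
  obtain ⟨t, rfl⟩ := h
  rw [List.getD_eq_getElem _ _ hm, List.getD_eq_getElem _ _ (by simp; omega),
    List.getElem_append_left hm]

lemma TR_eq (k n : ℕ) (h : n < (W k).length) : (W k).getD n 0 = TR n := by
  have h1 : n < (W (n+1)).length := by have := W_len (n+1); omega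
  rcases Nat.le_total k (n+1) with hk | hk
  · rw [prefix_getD (W_prefix hk) h]; rfl
  · rw [← prefix_getD (W_prefix hk) h1]; rfl

def L (j : ℕ) : List ℕ := σw ((List.range j).map TR)

def win (i : ℕ) : List ℕ := [TR i, TR (i+1), TR (i+2), TR (i+3)]

def F : List (List ℕ) := [[0,0,1,0],[0,1,0,0],[0,1,0,1],[0,1,0,2],[0,2,0,1],
  [1,0,0,1],[1,0,1,0],[1,0,2,0],[2,0,1,0]]

lemma L_succ (j : ℕ) : L (j+1) = L j ++ σm (TR j) := by
  simp [L, List.range_succ, σw_append, σw]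

lemma L_len_succ (j : ℕ) : (L (j+1)).length = (L j).length + (σm (TR j)).length := by
  simp [L_succ]

lemma range_map_TR (k : ℕ) : (List.range k).map TR = (W k).take k := by
  have hk : k ≤ (W k).length := by have := W_len k; omega
  apply List.ext_getElem
  · simp; omega
  · intro m h1 h2
    simp only [List.getElem_map, List.getElem_range, List.getElem_take]
    have hlt : m < (W k).length := by simp at h1; omega
    have := TR_eq k m hlt
    rw [List.getD_eq_getElem _ _ hlt] at this
    exact this.symm

lemma L_entry (j m : ℕ) (h : m < (L j).length) : (L j).getD m 0 = TR m := by
  have hp : L j <+: W (j+1) := by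
    rw [W_succ, L, range_map_TR]
    exact σw_prefix (List.take_prefix _ _)
  rw [prefix_getD hp h]
  exact TR_eq (j+1) m (lt_of_lt_of_le h hp.length_le)

lemma exists_block (i : ℕ) : ∃ j, (L j).length ≤ i ∧ i < (L (j+1)).length := by
  induction i with
  | zero =>
    refine ⟨0, by simp [L, σw], ?_⟩
    have := σm_len_pos (TR 0)
    have h0 : (L 0).length = 0 := by simp [L, σw]
    have := L_len_succ 0
    omega
  | succ n ih =>
    obtain ⟨j, h1, h2⟩ := ih
    rcases Nat.lt_or_ge (n+1) ((L (j+1)).length) with h | h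
    · exact ⟨j, by omega, h⟩
    · refine ⟨j+1, h, ?_⟩
      have := σm_len_pos (TR (j+1))
      rw [L_len_succ]
      omega

lemma L_len_ge (j : ℕ) (hj : 1 ≤ j) : j + 1 ≤ (L j).length := by
  induction j with
  | zero => omega
  | succ n ih =>
    rcases Nat.eq_or_lt_of_le hj with h | h
    · have hn0 : n = 0 := by omega
      subst hn0
      have h2 : (L 1).length = 2 := by decide
      simp only [Nat.zero_add]
      omega
    · have hn : 1 ≤ n := by omega
      have := ih hn
      have := σm_len_pos (TR n)
      rw [L_len_succ]
      omega

lemma σw_win_len (j : ℕ) : (σm (TR j)).length + 3 ≤ (σw (win j)).length := by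
  simp only [win, σw, List.length_append, List.length_nil]
  have := σm_len_pos (TR (j+1))
  have := σm_len_pos (TR (j+2))
  have := σm_len_pos (TR (j+3))
  omega

lemma σw_win_entry (j m : ℕ) (h : m < (σw (win j)).length) :
    (σw (win j)).getD m 0 = TR ((L j).length + m) := by
  have h4 : L (j+4) = L j ++ σw (win j) := by
    have : List.range (j+4) = List.range j ++ [j, j+1, j+2, j+3] := by
      rw [show j+4 = (j+3)+1 from rfl, List.range_succ,
          show j+3 = (j+2)+1 from rfl, List.range_succ,
          show j+2 = (j+1)+1 from rfl, List.range_succ, List.range_succ]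
      simp
    rw [L, this, List.map_append, σw_append]
    rfl
  have hm : (L j).length + m < (L (j+4)).length := by
    rw [h4, List.length_append]; omega
  have he := L_entry (j+4) _ hm
  rw [h4] at he
  rw [← he, List.getD_eq_getElem _ _ h,
      List.getD_eq_getElem _ _ (show (L j).length + m < (L j ++ σw (win j)).length by
        rw [List.length_append]; omega)]
  rw [List.getElem_append_right (by omega)]
  congr 1
  omega

lemma win_eq (i j t : ℕ) (hL : i = (L j).length + t) (ht : t < (σm (TR j)).length) :
    win i = [(σw (win j)).getD t 0, (σw (win j)).getD (t+1) 0,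
             (σw (win j)).getD (t+2) 0, (σw (win j)).getD (t+3) 0] := by
  have hlen := σw_win_len j
  rw [σw_win_entry j t (by omega), σw_win_entry j (t+1) (by omega),
      σw_win_entry j (t+2) (by omega), σw_win_entry j (t+3) (by omega)]
  subst hL
  simp [win, Nat.add_assoc]

lemma closF : ∀ q ∈ F, ∀ t < 2,
    [(σw q).getD t 0, (σw q).getD (t+1) 0, (σw q).getD (t+2) 0, (σw q).getD (t+3) 0] ∈ F := by
  decide

lemma win_mem (i : ℕ) : win i ∈ F := by
  induction i using Nat.strong_induction_on with
  | _ i ih =>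
    rcases Nat.lt_or_ge i 2 with h | h
    · interval_cases i <;> decide
    · obtain ⟨j, h1, h2⟩ := exists_block i
      have hj1 : 1 ≤ j := by
        by_contra hc
        push_neg at hc
        interval_cases j
        have hl1 : (L (0+1)).length = 2 := by decide
        omega
      have hji : j < i := by have := L_len_ge j hj1; omega
      have ht : i - (L j).length < (σm (TR j)).length := by
        have := L_len_succ j; omega
      rw [win_eq i j (i - (L j).length) (by omega) ht]
      exact closF (win j) (ih j hji) _ (lt_of_lt_of_le ht (σm_len_le _))


lemma occ_four (a i : ℕ) : occ a i 4 =
    (if TR i = a then 1 else 0) + (if TR (i+1) = a then 1 else 0) +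
    (if TR (i+2) = a then 1 else 0) + (if TR (i+3) = a then 1 else 0) := by
  simp only [occ, Finset.card_filter]
  rw [Finset.sum_range_succ, Finset.sum_range_succ, Finset.sum_range_succ,
      Finset.sum_range_succ, Finset.sum_range_zero]
  simp

lemma psi04 : ψv 0 4 = (2, 1, 1) := by decide

lemma frel_mem (i : ℕ) :
    frel i 4 = (0,0,0) ∨ frel i 4 = (0,1,-1) ∨ frel i 4 = (1,0,-1) := by
  have h := win_mem i
  have hf : frel i 4 = ψv i 4 - (2,1,1) := by rw [frel, psi04]
  simp only [F, List.mem_cons, List.not_mem_nil, or_false] at h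
  rw [hf]
  rcases h with h|h|h|h|h|h|h|h|h <;>
  · simp only [win, List.cons.injEq, and_true] at h
    obtain ⟨e0, e1, e2, e3⟩ := h
    simp [ψv, occ_four, e0, e1, e2, e3, Prod.ext_iff]

lemma wit0 : frel 0 4 = (0,0,0) := by decide
lemma wit4 : frel 4 4 = (1,0,-1) := by decide
lemma wit5 : frel 5 4 = (0,1,-1) := by decide


/-- A₄ = {(0,0,0), (0,1,−1), (1,0,−1)} and hence ρ^ab(4) = 3. -/
theorem Aset_four :
    Aset 4 = ({(0, 0, 0), (0, 1, -1), (1, 0, -1)} : Set (ℤ × ℤ × ℤ)) ∧ ρab 4 = 3 := by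
  have hA : Aset 4 = ({(0, 0, 0), (0, 1, -1), (1, 0, -1)} : Set (ℤ × ℤ × ℤ)) := by
    ext v
    simp only [Aset, Set.mem_setOf_eq, Set.mem_insert_iff, Set.mem_singleton_iff]
    constructor
    · rintro ⟨i, rfl⟩; exact frel_mem i
    · rintro (rfl | rfl | rfl)
      exacts [⟨0, wit0⟩, ⟨5, wit5⟩, ⟨4, wit4⟩]
  refine ⟨hA, ?_⟩
  rw [ρab, hA]
  rw [Set.ncard_insert_of_notMem (by decide),
      Set.ncard_insert_of_notMem (by decide), Set.ncard_singleton]
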